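/- arXiv:1608.03979 — 2 statements merged into one kernel-verified Lean document; each statement's English description precedes it below -/
import Mathlib

section
/- For each α ∈ ℝ, the map G × G → ℝ, (a, b) ↦ D^α(a‖b), is of class C^∞ (infinitely Fréchet differentiable). -/
open MeasureTheory BoundedContinuousFunction

noncomputable section

namespace Paper

variable {Y : Type*} [TopologicalSpace Y]

/-- Pointwise exponential map on `G = C_b(B;ℝ)`: `expG a x = exp (a x)`. -/
def expG (a : BoundedContinuousFunction Y ℝ) : BoundedContinuousFunction Y ℝ :=
  BoundedContinuousFunction.ofNormedAddCommGroup (fun x => Real.exp (a x))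
    (Real.continuous_exp.comp a.continuous) (Real.exp ‖a‖)
    (fun x => by
      rw [Real.norm_eq_abs, abs_of_pos (Real.exp_pos _)]
      exact Real.exp_le_exp.2 ((le_abs_self _).trans (a.norm_coe_le_norm x)))

@[simp] lemma expG_apply (a : BoundedContinuousFunction Y ℝ) (x : Y) :
    expG a x = Real.exp (a x) := rfl

/-- Amari's α-embedding chart `φ_α`. -/
def phi (α : ℝ) (a : BoundedContinuousFunction Y ℝ) : BoundedContinuousFunction Y ℝ :=
  if α = 1 then a else (2 / (1 - α)) • (expG (((1 - α) / 2) • a) - 1)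

variable [MeasurableSpace Y]

/-- The α-divergence `D^α(a‖b)` (for `α ≠ ±1`) between the finite measures with
`μ`-densities `exp_G(a)` and `exp_G(b)`. -/
def Dalpha (μ : Measure Y) (α : ℝ) (a b : BoundedContinuousFunction Y ℝ) : ℝ :=
  (2 / (1 + α)) * ∫ x, (phi (-1) a x - phi α a x) ∂μ
    + (2 / (1 - α)) * ∫ x, (phi (-1) b x - phi (-α) b x) ∂μ
    - ∫ x, phi α a x * phi (-α) b x ∂μ

/-- The extended Kullback–Leibler divergence `D^{−1}(a‖b)`. -/
def DKL (μ : Measure Y) (a b : BoundedContinuousFunction Y ℝ) : ℝ :=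
  ∫ x, (expG b x - expG a x) ∂μ + ∫ x, expG a x * (a x - b x) ∂μ

end Paper

namespace Paper

variable {Y : Type*} [TopologicalSpace Y] [MeasurableSpace Y]

/-- The α-divergence for all `α ∈ ℝ`, including the limiting cases `α = ±1`. -/
def Dfull (μ : Measure Y) (α : ℝ) (a b : BoundedContinuousFunction Y ℝ) : ℝ :=
  if α = -1 then DKL μ a b else if α = 1 then DKL μ b a else Dalpha μ α a b

end Paper

/-!
On `G = C_b(B;ℝ)` the pointwise exponential `exp_G` is the exponential of the Banach algebra `G`
(evaluation at a point is a continuous ring homomorphism, so it commutes with `exp`), hence it is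
analytic, and so is every chart `φ_α`. Integration against the finite measure `μ` is a bounded
linear functional on `G`, so each `D^α` is a polynomial expression in smooth maps composed with a
continuous linear map, and is therefore smooth.
-/

namespace Paper

variable {Y : Type*} [TopologicalSpace Y]

lemma expG_eq_exp (a : Y →ᵇ ℝ) : expG a = NormedSpace.exp a := by
  ext x
  rw [expG_apply, Real.exp_eq_exp_ℝ]
  exact (NormedSpace.map_exp ((ContinuousMap.evalAlgHom ℝ ℝ x).comp (toContinuousMapₐ ℝ))
    (evalCLM ℝ x).continuous a).symm

@[fun_prop]
lemma contDiff_expG {n : WithTop ℕ∞} : ContDiff ℝ n (expG : (Y →ᵇ ℝ) → Y →ᵇ ℝ) := by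
  rw [funext expG_eq_exp]
  exact AnalyticOnNhd.contDiff fun a _ ↦ NormedSpace.exp_analytic a

@[fun_prop]
lemma contDiff_phi (α : ℝ) {n : WithTop ℕ∞} : ContDiff ℝ n (phi α : (Y →ᵇ ℝ) → Y →ᵇ ℝ) := by
  unfold phi
  split_ifs
  · exact contDiff_id
  · fun_prop

end Paper

namespace BoundedContinuousFunction

variable {Y : Type*} [TopologicalSpace Y] [MeasurableSpace Y] [OpensMeasurableSpace Y]

def integralCLM (μ : Measure Y) [IsFiniteMeasure μ] : (Y →ᵇ ℝ) →L[ℝ] ℝ :=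
  LinearMap.mkContinuous
    { toFun f := ∫ x, f x ∂μ
      map_add' f g := integral_add (f.integrable μ) (g.integrable μ)
      map_smul' c f := integral_smul c f }
    (μ Set.univ).toReal (fun f ↦ f.norm_integral_le_mul_norm μ)

end BoundedContinuousFunction

namespace Paper

variable {Y : Type*} [TopologicalSpace Y] [MeasurableSpace Y] [OpensMeasurableSpace Y]
  (μ : Measure Y) [IsFiniteMeasure μ]

lemma DKL_eq_integralCLM (a b : Y →ᵇ ℝ) :
    DKL μ a b = integralCLM μ (expG b - expG a) + integralCLM μ (expG a * (a - b)) := rfl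

lemma Dalpha_eq_integralCLM (α : ℝ) (a b : Y →ᵇ ℝ) :
    Dalpha μ α a b = 2 / (1 + α) * integralCLM μ (phi (-1) a - phi α a)
      + 2 / (1 - α) * integralCLM μ (phi (-1) b - phi (-α) b)
      - integralCLM μ (phi α a * phi (-α) b) := rfl

lemma contDiff_DKL {n : WithTop ℕ∞} :
    ContDiff ℝ n fun p : (Y →ᵇ ℝ) × (Y →ᵇ ℝ) ↦ DKL μ p.1 p.2 := by
  simp only [DKL_eq_integralCLM]
  fun_prop

lemma contDiff_Dalpha (α : ℝ) {n : WithTop ℕ∞} :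
    ContDiff ℝ n fun p : (Y →ᵇ ℝ) × (Y →ᵇ ℝ) ↦ Dalpha μ α p.1 p.2 := by
  simp only [Dalpha_eq_integralCLM]
  fun_prop

end Paper

theorem statement_12_general {X : Type*} [NormedAddCommGroup X]
    [MeasurableSpace X] [OpensMeasurableSpace X]
    (B : Set X)
    (μ : Measure B) [IsProbabilityMeasure μ] (α : ℝ) :
    ContDiff ℝ (⊤ : ℕ∞)
      (fun p : BoundedContinuousFunction B ℝ × BoundedContinuousFunction B ℝ =>
        Paper.Dfull μ α p.1 p.2) := by
  unfold Paper.Dfull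
  split_ifs
  · exact Paper.contDiff_DKL μ
  · exact (Paper.contDiff_DKL μ).comp (contDiff_snd.prodMk contDiff_fst)
  · exact Paper.contDiff_Dalpha μ α

/-- for each `α ∈ ℝ`, the map `(a, b) ↦ D^α(a‖b)` is of class `C^∞`
(infinitely Fréchet differentiable) on `G × G`. -/
theorem statement_12 {X : Type*} [NormedAddCommGroup X] [NormedSpace ℝ X]
    [MeasurableSpace X] [OpensMeasurableSpace X]
    (B : Set X) (hB : IsOpen B) (hBne : B.Nonempty)
    (μ : Measure B) [IsProbabilityMeasure μ] (α : ℝ) :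
    ContDiff ℝ (⊤ : ℕ∞)
      (fun p : BoundedContinuousFunction B ℝ × BoundedContinuousFunction B ℝ =>
        Paper.Dfull μ α p.1 p.2) :=
  statement_12_general B μ α
end
end

section
/- Chart representation of the α-covariant derivative on M: fix α ∈ ℝ, a, u ∈ G, and let v : G → G be Fréchet differentiable. Define g : G → G by g(c) := exp_G(((1−α)/2)·c)·v(c). Then exp_G(−((1−α)/2)·a)·(Dg(a)(u)) = Dv(a)(u) + ((1−α)/2)·u·v(a), where Dg(a) and Dv(a) denote Fréchet derivatives. (This identity says that the covariant derivative ∇^α, defined by requiring the chart φ_α to be affine, has φ₁-chart representation (u, v) ↦ Dv(a)(u) + ((1−α)/2)·u·v(a); it yields the linear relation ∇^α = ((1−α)/2)∇^{−1} + ((1+α)/2)∇^{+1}.) -/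
open MeasureTheory BoundedContinuousFunction

noncomputable section

/-! `expG` is the exponential of the commutative Banach algebra `C_b(B; ℝ)`, so the identity is
the product and chain rules for `c ↦ exp (s • c) * v c` in any commutative real Banach algebra,
followed by cancelling `exp (-(s • a)) * exp (s • a) = 1`. -/

open NormedSpace

namespace Paper

variable {Y : Type*} [TopologicalSpace Y]

theorem expG_eq_exp_s14 : (expG : BoundedContinuousFunction Y ℝ → _) = exp := by
  ext a x
  let evalAt : BoundedContinuousFunction Y ℝ →+* ℝ :=
    { toFun := fun f => f x, map_one' := rfl, map_mul' := fun _ _ => rfl,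
      map_zero' := rfl, map_add' := fun _ _ => rfl }
  rw [expG_apply, Real.exp_eq_exp_ℝ]
  exact (map_exp evalAt (BoundedContinuousFunction.evalCLM ℝ x).continuous a).symm

end Paper

section CommBanachAlgebra

variable {𝔸 : Type*} [NormedCommRing 𝔸] [NormedAlgebra ℝ 𝔸] [CompleteSpace 𝔸]

theorem exp_neg_smul_mul_fderiv_exp_smul_mul {v : 𝔸 → 𝔸} {a : 𝔸} (hv : DifferentiableAt ℝ v a)
    (s : ℝ) (u : 𝔸) :
    exp (-(s • a)) * fderiv ℝ (fun c => exp (s • c) * v c) a u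
      = fderiv ℝ v a u + s • (u * v a) := by
  have hexp : HasFDerivAt (fun c : 𝔸 => exp (s • c))
      ((exp (s • a) • (1 : 𝔸 →L[ℝ] 𝔸)).comp (s • ContinuousLinearMap.id ℝ 𝔸)) a :=
    hasFDerivAt_exp.comp a ((hasFDerivAt_id a).const_smul s)
  have hg : HasFDerivAt (fun c => exp (s • c) * v c) _ a := hexp.mul hv.hasFDerivAt
  have hinv : exp (-(s • a)) * exp (s • a) = 1 := by
    -- `exp_add` is stated for `ℚ`-Banach algebras; `exp` itself carries no algebra instance.
    let _ : NormedAlgebra ℚ 𝔸 := NormedAlgebra.restrictScalars ℚ ℝ 𝔸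
    rw [← exp_add, neg_add_cancel, exp_zero]
  rw [hg.fderiv]
  simp only [ContinuousLinearMap.comp_smulₛₗ, Real.ringHom_apply, ContinuousLinearMap.comp_id,
    _root_.add_apply, _root_.smul_apply, smul_eq_mul, one_apply_eq_self, mul_smul_comm]
  rw [mul_add, ← mul_assoc, hinv, one_mul, mul_smul_comm]
  congr 2
  linear_combination (u * v a) * hinv

end CommBanachAlgebra

theorem statement_14_general {X : Type*} [NormedAddCommGroup X]
    (B : Set X) (α : ℝ)
    (a u : BoundedContinuousFunction B ℝ)
    (v : BoundedContinuousFunction B ℝ → BoundedContinuousFunction B ℝ)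
    (hv : Differentiable ℝ v) :
    Paper.expG (-(((1 - α) / 2) • a))
        * fderiv ℝ (fun c => Paper.expG (((1 - α) / 2) • c) * v c) a u
      = fderiv ℝ v a u + ((1 - α) / 2) • (u * v a) := by
  rw [Paper.expG_eq_exp_s14]
  exact exp_neg_smul_mul_fderiv_exp_smul_mul (hv a) _ u

/-- chart representation of the α-covariant derivative on `M`: for
`α ∈ ℝ`, `a, u ∈ G` and a Fréchet differentiable `v : G → G`, setting
`g(c) := exp_G(((1−α)/2)·c)·v(c)` one has
`exp_G(−((1−α)/2)·a)·(Dg(a)(u)) = Dv(a)(u) + ((1−α)/2)·u·v(a)`. -/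
theorem statement_14 {X : Type*} [NormedAddCommGroup X] [NormedSpace ℝ X]
    (B : Set X) (hB : IsOpen B) (hBne : B.Nonempty) (α : ℝ)
    (a u : BoundedContinuousFunction B ℝ)
    (v : BoundedContinuousFunction B ℝ → BoundedContinuousFunction B ℝ)
    (hv : Differentiable ℝ v) :
    Paper.expG (-(((1 - α) / 2) • a))
        * fderiv ℝ (fun c => Paper.expG (((1 - α) / 2) • c) * v c) a u
      = fderiv ℝ v a u + ((1 - α) / 2) • (u * v a) :=
  statement_14_general B α a u v hv
end
end
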